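/- There is no injective K-algebra homomorphism ε : E^(3) → M₂(Ω), for any commutative K-algebra Ω, with tr(ε(g)) ∈ K for all g ∈ E^(3). Concretely, there exist no c₁, c₂ ∈ K such that (v₁ + v₂v₃)² + c₁(v₁ + v₂v₃) + c₂ = 0 holds in E^(3). -/

import Mathlib

/-!
Applying the coefficient of `v₁v₂v₃` (the determinant form on `⋀³ K³`) to a relation
`(v₁ + v₂v₃)² + c₁(v₁ + v₂v₃) + c₂ = 0` gives `2 = 0`, since `(v₁ + v₂v₃)² = 2v₁v₂v₃` while
`v₁ + v₂v₃` and `c₂` have no top-degree part. On the other hand, a `2 × 2` matrix `M` satisfies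
`M² - tr M • M + det M = 0` with `2 det M = (tr M)² - tr M²`, so under a constant-trace embedding
every element satisfies such a relation.
-/

open ExteriorAlgebra Matrix

namespace ExteriorAlgebra

variable (R : Type*) [CommRing R] (n : ℕ)

/-- The coefficient of `e₀ ∧ ⋯ ∧ eₙ₋₁`. -/
noncomputable def topCoeff : ExteriorAlgebra R (Fin n → R) →ₗ[R] R :=
  liftAlternating fun i =>
    if h : i = n then detRowAlternating.domDomCongr (finCongr h.symm) else 0

variable {R n}

theorem topCoeff_ιMulti (v : Fin n → Fin n → R) : topCoeff R n (ιMulti R n v) = (of v).det := by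
  simp only [topCoeff, liftAlternating_apply_ιMulti, dite_true, finCongr_refl,
    AlternatingMap.domDomCongr_refl]
  rfl

theorem topCoeff_ιMulti_of_ne {m : ℕ} (hm : m ≠ n) (v : Fin m → Fin n → R) :
    topCoeff R n (ιMulti R m v) = 0 := by
  simp [topCoeff, hm]

theorem sq_ι_add_ι_mul_ι {M : Type*} [AddCommGroup M] [Module R M] (x y z : M) :
    (ι R x + ι R y * ι R z) ^ 2 = 2 * (ι R x * ι R y * ι R z) := by
  have swap (u v : M) : ι R u * ι R v = -(ι R v * ι R u) :=
    eq_neg_of_add_eq_zero_left (ι_add_mul_swap u v)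
  have hyzyz : ι R y * ι R z * (ι R y * ι R z) = 0 := by
    rw [mul_assoc, ← mul_assoc (ι R z), swap z y]
    simp [mul_assoc]
  have hyzx : ι R y * ι R z * ι R x = ι R x * ι R y * ι R z := by
    rw [mul_assoc, swap z x, mul_neg, ← mul_assoc, swap y x]
    simp [mul_assoc]
  rw [sq, add_mul, mul_add, mul_add, ι_sq_zero, hyzyz, hyzx, ← mul_assoc]
  simp [two_mul]

theorem not_exists_sq_add_smul_add_algebraMap_eq_zero {x y z : Fin 3 → R}
    (hdet : 2 * (of ![x, y, z]).det ≠ 0) :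
    ¬ ∃ c₁ c₂ : R, (ι R x + ι R y * ι R z) ^ 2 + c₁ • (ι R x + ι R y * ι R z) +
      algebraMap R _ c₂ = 0 := by
  rintro ⟨c₁, c₂, hrel⟩
  have hx : ι R x = ιMulti R 1 ![x] := by simp [ιMulti_apply]
  have hyz : ι R y * ι R z = ιMulti R 2 ![y, z] := by simp [ιMulti_apply]
  have hxyz : ι R x * ι R y * ι R z = ιMulti R 3 ![x, y, z] := by simp [ιMulti_apply, mul_assoc]
  have hc₂ : algebraMap R _ c₂ = c₂ • ιMulti R 0 (![] : Fin 0 → Fin 3 → R) := by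
    rw [ιMulti_zero_apply, Algebra.algebraMap_eq_smul_one]
  rw [sq_ι_add_ι_mul_ι, hxyz, hyz, hx, hc₂, two_mul] at hrel
  have hcoeff := congrArg (topCoeff R 3) hrel
  simp only [map_add, map_smul, topCoeff_ιMulti, topCoeff_ιMulti_of_ne (by decide : 1 ≠ 3),
    topCoeff_ιMulti_of_ne (by decide : 2 ≠ 3), topCoeff_ιMulti_of_ne (by decide : 0 ≠ 3),
    smul_zero, add_zero, map_zero] at hcoeff
  exact hdet (by rw [two_mul, hcoeff])

end ExteriorAlgebra

namespace Matrix

variable {R : Type*} [CommRing R]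

theorem sq_sub_trace_smul_add_det_smul_one_fin_two (M : Matrix (Fin 2) (Fin 2) R) :
    M ^ 2 - M.trace • M + M.det • (1 : Matrix (Fin 2) (Fin 2) R) = 0 := by
  nontriviality R
  simpa [charpoly_fin_two, Algebra.smul_def, ← smul_eq_mul_diagonal] using M.aeval_self_charpoly

theorem two_mul_det_fin_two (M : Matrix (Fin 2) (Fin 2) R) :
    2 * M.det = M.trace ^ 2 - (M ^ 2).trace := by
  simp only [det_fin_two, trace_fin_two, sq, mul_apply, Fin.sum_univ_two]
  ring

theorem sq_sub_smul_add_algebraMap_eq_zero_of_trace_eq_algebraMap {K : Type*} [Field K]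
    [Algebra K R] (h2 : (2 : K) ≠ 0) (M : Matrix (Fin 2) (Fin 2) R) {k₁ k₂ : K}
    (h₁ : M.trace = algebraMap K R k₁) (h₂ : (M ^ 2).trace = algebraMap K R k₂) :
    M ^ 2 - k₁ • M + algebraMap K _ ((k₁ ^ 2 - k₂) / 2) = 0 := by
  have hdet : M.det = algebraMap K R ((k₁ ^ 2 - k₂) / 2) := by
    have h2R : IsUnit (2 : R) := by
      simpa only [map_ofNat] using (IsUnit.mk0 _ h2).map (algebraMap K R)
    refine h2R.mul_left_cancel ?_
    rw [two_mul_det_fin_two, h₁, h₂, ← map_ofNat (algebraMap K R) 2, ← map_pow, ← map_sub,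
      ← map_mul, mul_div_cancel₀ _ h2]
  rw [← sq_sub_trace_smul_add_det_smul_one_fin_two M, h₁, hdet, algebraMap_smul, algebraMap_smul,
    Algebra.algebraMap_eq_smul_one]

variable {K A : Type*} [Field K] [Algebra K R] [Ring A] [Algebra K A]

theorem exists_sq_add_smul_add_algebraMap_eq_zero_of_injective (h2 : (2 : K) ≠ 0)
    (ε : A →ₐ[K] Matrix (Fin 2) (Fin 2) R) (hε : Function.Injective ε)
    (htr : ∀ g, ∃ k : K, (ε g).trace = algebraMap K R k) (g : A) :
    ∃ c₁ c₂ : K, g ^ 2 + c₁ • g + algebraMap K A c₂ = 0 := by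
  obtain ⟨k₁, h₁⟩ := htr g
  obtain ⟨k₂, h₂⟩ := htr (g ^ 2)
  refine ⟨-k₁, (k₁ ^ 2 - k₂) / 2, hε ?_⟩
  rw [map_pow] at h₂
  simpa [sub_eq_add_neg] using
    sq_sub_smul_add_algebraMap_eq_zero_of_trace_eq_algebraMap h2 (ε g) h₁ h₂

end Matrix

theorem stmt_10.{u} (K : Type) [Field K] [CharZero K] :
    (∀ (Ω : Type u) [CommRing Ω] [Algebra K Ω]
        (ε : ExteriorAlgebra K (Fin 3 → K) →ₐ[K] Matrix (Fin 2) (Fin 2) Ω),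
      Function.Injective ε →
        ¬ (∀ g, ∃ k : K, Matrix.trace (ε g) = algebraMap K Ω k)) ∧
    ¬ ∃ c₁ c₂ : K,
        (ExteriorAlgebra.ι K ((Pi.single 0 1 : Fin 3 → K)) +
            ExteriorAlgebra.ι K ((Pi.single 1 1 : Fin 3 → K)) *
              ExteriorAlgebra.ι K ((Pi.single 2 1 : Fin 3 → K))) ^ 2 +
          c₁ • (ExteriorAlgebra.ι K ((Pi.single 0 1 : Fin 3 → K)) +
            ExteriorAlgebra.ι K ((Pi.single 1 1 : Fin 3 → K)) *
              ExteriorAlgebra.ι K ((Pi.single 2 1 : Fin 3 → K))) +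
          algebraMap K (ExteriorAlgebra K (Fin 3 → K)) c₂ = 0 := by
  have hno := not_exists_sq_add_smul_add_algebraMap_eq_zero (R := K)
    (x := Pi.single 0 1) (y := Pi.single 1 1) (z := Pi.single 2 1) (by simp [det_fin_three])
  exact ⟨fun Ω _ _ ε hε htr =>
    hno (exists_sq_add_smul_add_algebraMap_eq_zero_of_injective two_ne_zero ε hε htr _), hno⟩
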